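/- Let A be a UP-algebra and B a UP-ideal of A. Define x ∼_B y iff x·y ∈ B and y·x ∈ B. Then ∼_B is a congruence on A, i.e., an equivalence relation such that x ∼_B y implies x·z ∼_B y·z and z·x ∼_B z·y for all z. -/
import Mathlib


class UPAlgebra (A : Type*) extends Mul A, Zero A where
  up1 : ∀ x y z : A, (y * z) * ((x * y) * (x * z)) = 0
  up2 : ∀ x : A, 0 * x = x
  up3 : ∀ x : A, x * 0 = 0
  up4 : ∀ x y : A, x * y = 0 → y * x = 0 → x = y

def IsUPIdeal {A : Type*} [UPAlgebra A] (B : Set A) : Prop :=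
  (0 : A) ∈ B ∧ ∀ x y z : A, x * (y * z) ∈ B → y ∈ B → x * z ∈ B

-- x * x = 0
lemma up_self {A : Type*} [UPAlgebra A] (x : A) : x * x = 0 := by
  have h := UPAlgebra.up1 (0 : A) 0 x
  simpa [UPAlgebra.up2] using h

-- closure: b ∈ B, b * c ∈ B ⇒ c ∈ B
lemma up_closed {A : Type*} [UPAlgebra A] {B : Set A} (hB : IsUPIdeal B)
    {b c : A} (hb : b ∈ B) (hbc : b * c ∈ B) : c ∈ B := by
  have h := hB.2 0 b c (by simpa [UPAlgebra.up2] using hbc) hb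
  simpa [UPAlgebra.up2] using h

-- right translation: x*y ∈ B ⇒ (y*z)*(x*z) ∈ B
lemma up_right {A : Type*} [UPAlgebra A] {B : Set A} (hB : IsUPIdeal B)
    {x y : A} (h : x * y ∈ B) (z : A) : (y * z) * (x * z) ∈ B := by
  have h1 : (y * z) * ((x * y) * (x * z)) ∈ B := by
    rw [UPAlgebra.up1]; exact hB.1
  exact hB.2 (y * z) (x * y) (x * z) h1 h

-- left translation: x*y ∈ B ⇒ (z*x)*(z*y) ∈ B
lemma up_left {A : Type*} [UPAlgebra A] {B : Set A} (hB : IsUPIdeal B)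
    {x y : A} (h : x * y ∈ B) (z : A) : (z * x) * (z * y) ∈ B := by
  have h1 : (x * y) * ((z * x) * (z * y)) ∈ B := by
    rw [UPAlgebra.up1]; exact hB.1
  exact up_closed hB h h1

theorem up_ideal_congruence {A : Type*} [UPAlgebra A] {B : Set A} (hB : IsUPIdeal B) :
    Equivalence (fun x y : A => x * y ∈ B ∧ y * x ∈ B) ∧
    (∀ x y z : A, (x * y ∈ B ∧ y * x ∈ B) →
      ((x * z) * (y * z) ∈ B ∧ (y * z) * (x * z) ∈ B) ∧
      ((z * x) * (z * y) ∈ B ∧ (z * y) * (z * x) ∈ B)) := by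
  constructor
  · constructor
    · intro x
      constructor <;> (rw [up_self]; exact hB.1)
    · intro x y ⟨h1, h2⟩
      exact ⟨h2, h1⟩
    · intro x y z ⟨hxy, hyx⟩ ⟨hyz, hzy⟩
      constructor
      · -- x*z ∈ B from (y*z)*(x*z) ∈ B and y*z ∈ B
        exact up_closed hB hyz (up_right hB hxy z)
      · exact up_closed hB hyx (up_right hB hzy x)
  · intro x y z ⟨hxy, hyx⟩
    exact ⟨⟨up_right hB hyx z, up_right hB hxy z⟩,
           ⟨up_left hB hxy z, up_left hB hyx z⟩⟩
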